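/- Let $F$ be a reduced $(s,t)$-Steiner bundle on $\mathbb{P}^n$ and $(\alpha, H)$ a jumping pair of $F$. Let $S' \subset S$ and $T' \subset T$ be the hyperplanes corresponding to $\alpha \in \mathbb{P}(S)$ and $(\alpha, H) \in \mathbb{P}(T)$, and let $F'$ be the kernel of the natural composition $F \to F|_H \to \mathcal{O}_H$ defined by $(\alpha, H)$. Then $F'$ is an $(s-1, t-1)$-Steiner bundle with resolution $0 \to S' \otimes \mathcal{O}_{\mathbb{P}^n}(-1) \to T' \otimes \mathcal{O}_{\mathbb{P}^n} \to F' \to 0$, and its defining map $\varphi'$ fits in a commutative square with $\varphi$ via the dual inclusions $j^* : T^* \to (T')^*$ and $i^* \otimes \mathrm{id} : S^* \otimes H^0(\mathcal{O}(1)) \to (S')^* \otimes H^0(\mathcal{O}(1))$. -/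

import Mathlib

open Module

variable {k : Type*} [Field k]

/-- The linear map `φ : T* → Hom(H⁰(O(1))*, S*)`, `φ g = (u ↦ g ∘ μ u)`, associated to
the resolution datum `μ : H⁰(O(1))* → Hom(S,T)` of a Steiner bundle on `ℙⁿ`. -/
noncomputable def steinerDual {S T : Type*} [AddCommGroup S] [Module k S]
    [AddCommGroup T] [Module k T] {n : ℕ}
    (μ : (Fin (n + 1) → k) →ₗ[k] (S →ₗ[k] T)) :
    (T →ₗ[k] k) →ₗ[k] ((Fin (n + 1) → k) →ₗ[k] (S →ₗ[k] k)) where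
  toFun g :=
    { toFun := fun u => g.comp (μ u)
      map_add' := fun u₁ u₂ => by ext x; simp
      map_smul' := fun c u => by ext x; simp }
  map_add' g₁ g₂ := by ext u x; simp
  map_smul' c g := by ext u x; simp

/-! The jumping-pair condition `φ g₀ = h ⊗ v` says `g₀ (μ u x) = h u * v x`, so every `μ u`
maps `S' = ker v` into `T' = ker g₀`. The transformed datum `μ'` is the restriction of `μ`;
it inherits fiberwise injectivity, and the square with `φ` commutes by construction. -/

namespace LinearMap

variable {R U M N : Type*} [CommSemiring R] [AddCommMonoid U] [AddCommMonoid M]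
  [AddCommMonoid N] [Module R U] [Module R M] [Module R N]

def restrict₂ (f : U →ₗ[R] M →ₗ[R] N) {p : Submodule R M} {q : Submodule R N}
    (hf : ∀ u, ∀ x ∈ p, f u x ∈ q) : U →ₗ[R] p →ₗ[R] q where
  toFun u := (f u).restrict (hf u)
  map_add' u₁ u₂ := by ext x; simp
  map_smul' c u := by ext x; simp

@[simp]
theorem coe_restrict₂_apply (f : U →ₗ[R] M →ₗ[R] N) {p : Submodule R M} {q : Submodule R N}
    (hf : ∀ u, ∀ x ∈ p, f u x ∈ q) (u : U) (x : p) : (f.restrict₂ hf u x : N) = f u x :=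
  rfl

theorem injective_restrict₂_apply (f : U →ₗ[R] M →ₗ[R] N) {p : Submodule R M}
    {q : Submodule R N} (hf : ∀ u, ∀ x ∈ p, f u x ∈ q) {u : U} (hu : Function.Injective (f u)) :
    Function.Injective (f.restrict₂ hf u) :=
  fun _ _ hxy => Subtype.ext (hu (congrArg Subtype.val hxy))

end LinearMap

section SteinerDatum

variable {S T : Type*} [AddCommGroup S] [Module k S] [AddCommGroup T] [Module k T] {n : ℕ}
  (μ : (Fin (n + 1) → k) →ₗ[k] (S →ₗ[k] T))

@[simp]
theorem steinerDual_apply_apply (g : T →ₗ[k] k) (u : Fin (n + 1) → k) :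
    steinerDual μ g u = g.comp (μ u) :=
  rfl

theorem steinerDual_restrict₂ {p : Submodule k S} {q : Submodule k T}
    (hpq : ∀ u, ∀ x ∈ p, μ u x ∈ q) (g : T →ₗ[k] k) (u : Fin (n + 1) → k) :
    steinerDual (μ.restrict₂ hpq) (g.comp q.subtype) u = (steinerDual μ g u).comp p.subtype :=
  rfl

variable {μ} {v : S →ₗ[k] k} {h : (Fin (n + 1) → k) →ₗ[k] k} {g₀ : T →ₗ[k] k}

theorem apply_apply_eq_mul_of_steinerDual_eq_smulRight (hg₀ : steinerDual μ g₀ = h.smulRight v)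
    (u : Fin (n + 1) → k) (x : S) : g₀ (μ u x) = h u * v x := by
  simpa using LinearMap.congr_fun₂ hg₀ u x

theorem mem_ker_of_steinerDual_eq_smulRight (hg₀ : steinerDual μ g₀ = h.smulRight v)
    (u : Fin (n + 1) → k) : ∀ x ∈ LinearMap.ker v, μ u x ∈ LinearMap.ker g₀ := by
  intro x hx
  rw [LinearMap.mem_ker] at hx ⊢
  rw [apply_apply_eq_mul_of_steinerDual_eq_smulRight hg₀, hx, mul_zero]

theorem ne_zero_of_steinerDual_eq_smulRight (hv : v ≠ 0) (hh : h ≠ 0)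
    (hg₀ : steinerDual μ g₀ = h.smulRight v) : g₀ ≠ 0 := by
  rintro rfl
  rw [map_zero, eq_comm, LinearMap.smulRight_apply_eq_zero_iff] at hg₀
  exact hg₀.elim hh hv

end SteinerDatum

theorem steiner_transform_general {S T : Type*}
    [AddCommGroup S] [Module k S] [FiniteDimensional k S]
    [AddCommGroup T] [Module k T] [FiniteDimensional k T]
    {n s t : ℕ} (hS : finrank k S = s) (hT : finrank k T = t)
    (μ : (Fin (n + 1) → k) →ₗ[k] (S →ₗ[k] T))
    (hsteiner : ∀ u : Fin (n + 1) → k, u ≠ 0 → Function.Injective (μ u))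
    (v : S →ₗ[k] k) (hv : v ≠ 0)
    (h : (Fin (n + 1) → k) →ₗ[k] k) (hh : h ≠ 0)
    (g₀ : T →ₗ[k] k) (hg₀ : steinerDual μ g₀ = h.smulRight v) :
    (∀ (u : Fin (n + 1) → k), ∀ x ∈ LinearMap.ker v, μ u x ∈ LinearMap.ker g₀)
    ∧ finrank k ↥(LinearMap.ker v) = s - 1
    ∧ finrank k ↥(LinearMap.ker g₀) = t - 1
    ∧ ∃ μ' : (Fin (n + 1) → k) →ₗ[k]
        (↥(LinearMap.ker v) →ₗ[k] ↥(LinearMap.ker g₀)),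
        (∀ (u : Fin (n + 1) → k) (x : ↥(LinearMap.ker v)),
          ((μ' u x : T) = μ u (x : S)))
        ∧ (∀ u : Fin (n + 1) → k, u ≠ 0 → Function.Injective (μ' u))
        ∧ (∀ (g : T →ₗ[k] k) (u : Fin (n + 1) → k),
            steinerDual μ' (g.comp (LinearMap.ker g₀).subtype) u
              = (steinerDual μ g u).comp (LinearMap.ker v).subtype) := by
  have hmaps := mem_ker_of_steinerDual_eq_smulRight hg₀
  have hrank_S := Module.Dual.finrank_ker_add_one_of_ne_zero hv
  have hrank_T := Module.Dual.finrank_ker_add_one_of_ne_zero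
    (ne_zero_of_steinerDual_eq_smulRight hv hh hg₀)
  refine ⟨hmaps, by omega, by omega, μ.restrict₂ hmaps, μ.coe_restrict₂_apply hmaps,
    fun u hu => μ.injective_restrict₂_apply hmaps (hsteiner u hu),
    steinerDual_restrict₂ μ hmaps⟩

/-- **Proposition (transform).**  Let `F` be a reduced `(s,t)`-Steiner bundle on `ℙⁿ`
with resolution datum `μ` and dual map `φ = steinerDual μ`, and let `(α, H)` be a
jumping pair of `F`: `α = [v]` with `v ∈ S*` nonzero, `H = {h = 0}` with
`h ∈ H⁰(O(1))` nonzero, and `φ g₀ = h ⊗ v` for (a necessarily unique, nonzero)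
`g₀ ∈ T*`.  Let `S' = ker v ⊂ S` and `T' = ker g₀ ⊂ T` be the corresponding
hyperplanes.  Then `μ` restricts to a datum `μ' : H⁰(O(1))* → Hom(S', T')`, which is
again a fiberwise-injective (Steiner) datum; the resulting bundle `F'`, the kernel of
the composition `F → F|_H → O_H` defined by `(α, H)`, is an `(s-1, t-1)`-Steiner
bundle with resolution `0 → S' ⊗ O(-1) → T' ⊗ O → F' → 0`, and its dual map
`φ' = steinerDual μ'` fits in the commutative square
`φ' ∘ j* = (i* ⊗ id) ∘ φ` with the dual hyperplane inclusions `j* : T* → T'*`,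
`i* : S* → S'*`. -/
theorem steiner_transform {S T : Type*} [IsAlgClosed k]
    [AddCommGroup S] [Module k S] [FiniteDimensional k S]
    [AddCommGroup T] [Module k T] [FiniteDimensional k T]
    {n s t : ℕ} (hs : 2 ≤ s) (hS : finrank k S = s) (hT : finrank k T = t)
    (μ : (Fin (n + 1) → k) →ₗ[k] (S →ₗ[k] T))
    (hsteiner : ∀ u : Fin (n + 1) → k, u ≠ 0 → Function.Injective (μ u))
    (hreduced : Function.Injective (steinerDual μ))
    (v : S →ₗ[k] k) (hv : v ≠ 0)
    (h : (Fin (n + 1) → k) →ₗ[k] k) (hh : h ≠ 0)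
    (g₀ : T →ₗ[k] k) (hg₀ : steinerDual μ g₀ = h.smulRight v) :
    (∀ (u : Fin (n + 1) → k), ∀ x ∈ LinearMap.ker v, μ u x ∈ LinearMap.ker g₀)
    ∧ finrank k ↥(LinearMap.ker v) = s - 1
    ∧ finrank k ↥(LinearMap.ker g₀) = t - 1
    ∧ ∃ μ' : (Fin (n + 1) → k) →ₗ[k]
        (↥(LinearMap.ker v) →ₗ[k] ↥(LinearMap.ker g₀)),
        (∀ (u : Fin (n + 1) → k) (x : ↥(LinearMap.ker v)),
          ((μ' u x : T) = μ u (x : S)))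
        ∧ (∀ u : Fin (n + 1) → k, u ≠ 0 → Function.Injective (μ' u))
        ∧ (∀ (g : T →ₗ[k] k) (u : Fin (n + 1) → k),
            steinerDual μ' (g.comp (LinearMap.ker g₀).subtype) u
              = (steinerDual μ g u).comp (LinearMap.ker v).subtype) :=
  steiner_transform_general hS hT μ hsteiner v hv h hh g₀ hg₀
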